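/- Suppose q_j = q ∈ (0,1] for all j, and let T = Σ_i t_i and p*_j = t_j/T. Then for every Searcher sequence ξ: u(p*, ξ) ≥ (1−q)T/q + (Σ_j t_j² + T²)/(2T). Consequently, the Hider's equalizing strategy p* guarantees expected search time at least (1−q)T/q + (Σ_j t_j² + T²)/(2T). -/

import Mathlib

open scoped ENNReal Classical

/-- `looks ξ j k` = number of looks in box `j` among the first `k` looks of `ξ`. -/
def looks {n : ℕ} (ξ : ℕ → Fin n) (j : Fin n) (k : ℕ) : ℕ :=
  ((Finset.range k).filter (fun i => ξ i = j)).card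

/-- Expected search time (in `[0,∞]`) to find a target hidden in box `j`, when the boxes
have search times `t` and detection probabilities `q`, and the Searcher uses the
sequence `ξ`. -/
noncomputable def searchTime {n : ℕ} (t q : Fin n → ℝ) (j : Fin n) (ξ : ℕ → Fin n) : ℝ≥0∞ :=
  ∑' k : ℕ, ENNReal.ofReal (t (ξ k) * (1 - q j) ^ looks ξ j k)

/-- Expected search time against the mixed Hider strategy `p`. -/
noncomputable def mixedSearchTime {n : ℕ} (t q : Fin n → ℝ) (p : Fin n → ℝ)
    (ξ : ℕ → Fin n) : ℝ≥0∞ :=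
  ∑ j : Fin n, ENNReal.ofReal (p j) * searchTime t q j ξ

/-- `cnt ξ a b m` = number of looks at box `a` made while box `b` has been looked at
at most `m` times before. -/
noncomputable def cnt {n : ℕ} (ξ : ℕ → Fin n) (a b : Fin n) (m : ℕ) : ℝ≥0∞ :=
  ∑' k : ℕ, if ξ k = a ∧ looks ξ b k ≤ m then 1 else 0

section LooksLemmas

variable {n : ℕ} (ξ : ℕ → Fin n)

lemma looks_mono (j : Fin n) : Monotone (looks ξ j) := by
  intro a b hab
  exact Finset.card_le_card (Finset.filter_subset_filter _ (Finset.range_subset_range.2 hab))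

lemma looks_succ (j : Fin n) (k : ℕ) :
    looks ξ j (k+1) = if ξ k = j then looks ξ j k + 1 else looks ξ j k := by
  unfold looks
  rw [Finset.range_add_one, Finset.filter_insert]
  split <;> simp [Finset.card_insert_of_notMem]

lemma looks_lt {j : Fin n} {k k' : ℕ} (h : ξ k = j) (hk : k < k') :
    looks ξ j k < looks ξ j k' := by
  have h1 : looks ξ j k + 1 ≤ looks ξ j (k+1) := by rw [looks_succ, if_pos h]
  have h2 := looks_mono ξ j (show k+1 ≤ k' from hk)
  omega

lemma lt_of_looks_lt {j : Fin n} {k k' : ℕ} (h : looks ξ j k < looks ξ j k') : k < k' := by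
  by_contra hc
  exact absurd (looks_mono ξ j (not_lt.1 hc)) (by omega)

lemma looks_le_of_not_many {j : Fin n} {v : ℕ}
    (hnm : ¬ ∃ k, ξ k = j ∧ looks ξ j k = v) : ∀ k, looks ξ j k ≤ v := by
  intro k
  induction k with
  | zero => simp [looks]
  | succ k ih =>
    rw [looks_succ]
    split
    · rename_i hk
      rcases Nat.lt_or_ge (looks ξ j k) v with h | h
      · omega
      · exact absurd ⟨k, hk, by omega⟩ hnm
    · exact ih

end LooksLemmas

lemma searchTime_eq_top {n : ℕ} (t q : Fin n → ℝ) (ht : ∀ j, 0 < t j) (j : Fin n)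
    (ξ : ℕ → Fin n) (v : ℕ) (hq0 : 0 ≤ q j) (hq1 : q j ≤ 1) (hrv : 0 < (1 - q j) ^ v)
    (hnm : ¬ ∃ k, ξ k = j ∧ looks ξ j k = v) : searchTime t q j ξ = ⊤ := by
  set ε : ℝ := (Finset.univ.inf' ⟨j, Finset.mem_univ j⟩ t) * (1 - q j) ^ v with hε
  have hε0 : 0 < ε := by
    apply mul_pos _ hrv
    obtain ⟨i, _, hi⟩ := Finset.exists_mem_eq_inf' (⟨j, Finset.mem_univ j⟩ :
      (Finset.univ : Finset (Fin n)).Nonempty) t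
    rw [hi]; exact ht i
  have hle : ∀ k : ℕ, ENNReal.ofReal ε ≤ ENNReal.ofReal (t (ξ k) * (1 - q j) ^ looks ξ j k) := by
    intro k
    apply ENNReal.ofReal_le_ofReal
    apply mul_le_mul
    · exact Finset.inf'_le t (Finset.mem_univ _)
    · exact pow_le_pow_of_le_one (by linarith) (by linarith)
        (looks_le_of_not_many ξ hnm k)
    · positivity
    · exact le_of_lt (ht _)
  have htop : (⊤ : ℝ≥0∞) ≤ searchTime t q j ξ := by
    rw [← ENNReal.tsum_const_eq_top_of_ne_zero (α := ℕ) (c := ENNReal.ofReal ε)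
      (by simpa using hε0)]
    exact ENNReal.tsum_le_tsum hle
  exact top_unique htop

lemma geo_shift (r' : ℝ≥0∞) (N : ℕ) :
    ∑' m : ℕ, (if N ≤ m then r' ^ m else 0) = r' ^ N * (1 - r')⁻¹ := by
  have hinj : Function.Injective (fun i : ℕ => N + i) := fun a b h => by
    simpa using h
  have h0 : Function.support (fun m : ℕ => if N ≤ m then r' ^ m else 0)
      ⊆ Set.range (fun i : ℕ => N + i) := by
    intro x hx
    by_cases hle : N ≤ x
    · exact ⟨x - N, by simp; omega⟩
    · simp [Function.mem_support, if_neg hle] at hx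
  rw [← Function.Injective.tsum_eq hinj h0]
  simp only [le_add_iff_nonneg_right, zero_le, if_true, pow_add]
  rw [ENNReal.tsum_mul_left, ENNReal.tsum_geometric]

lemma tsum_ind_lt (v : ℕ) (c : ℝ≥0∞) :
    ∑' w : ℕ, (if w < v then c else 0) = (v : ℝ≥0∞) * c := by
  rw [tsum_eq_sum (s := Finset.range v) (by intro b hb; rw [if_neg]; simpa using hb)]
  rw [Finset.sum_ite_of_true (by intro i hi; simpa using hi)]
  simp [mul_comm]

lemma grid_eval (r' : ℝ≥0∞) :
    ∑' (v : ℕ), ∑' (w : ℕ), ((if w < v then r' ^ v else 0) + (if v ≤ w then r' ^ w else 0))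
      = (∑' v : ℕ, (v : ℝ≥0∞) * r' ^ v) + (1 - r')⁻¹ * (1 - r')⁻¹ := by
  have h : ∀ v : ℕ, ∑' (w : ℕ), ((if w < v then r' ^ v else 0) + (if v ≤ w then r' ^ w else 0))
      = (v : ℝ≥0∞) * r' ^ v + r' ^ v * (1 - r')⁻¹ := by
    intro v
    rw [ENNReal.tsum_add, tsum_ind_lt, geo_shift]
  rw [tsum_congr h, ENNReal.tsum_add, ENNReal.tsum_mul_right, ENNReal.tsum_geometric]

lemma diag_eval (r' : ℝ≥0∞) :
    ∑' (m : ℕ), ((m : ℝ≥0∞) + 1) * r' ^ m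
      = (∑' v : ℕ, (v : ℝ≥0∞) * r' ^ v) + (1 - r')⁻¹ := by
  have h : ∀ m : ℕ, ((m : ℝ≥0∞) + 1) * r' ^ m = (m : ℝ≥0∞) * r' ^ m + r' ^ m := by
    intro m; ring
  rw [tsum_congr h, ENNReal.tsum_add, ENNReal.tsum_geometric]

lemma S1_eval {r : ℝ} (hr0 : 0 ≤ r) (hr1 : r < 1) :
    ∑' v : ℕ, (v : ℝ≥0∞) * (ENNReal.ofReal r) ^ v = ENNReal.ofReal (r / (1 - r) ^ 2) := by
  have hnorm : ‖r‖ < 1 := by simpa [abs_of_nonneg hr0] using hr1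
  have hs := hasSum_coe_mul_geometric_of_norm_lt_one (𝕜 := ℝ) hnorm
  have hterm : ∀ v : ℕ, (v : ℝ≥0∞) * (ENNReal.ofReal r) ^ v
      = ENNReal.ofReal ((v : ℝ) * r ^ v) := by
    intro v
    rw [← ENNReal.ofReal_pow hr0, ← ENNReal.ofReal_natCast v,
      ← ENNReal.ofReal_mul (by positivity)]
  rw [tsum_congr hterm, ← ENNReal.ofReal_tsum_of_nonneg (fun v => by positivity) hs.summable,
    hs.tsum_eq]

lemma one_sub_ofReal_sub {qc : ℝ} (hqc1 : qc ≤ 1) :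
    (1 : ℝ≥0∞) - ENNReal.ofReal (1 - qc) = ENNReal.ofReal qc := by
  rw [← ENNReal.ofReal_one, ← ENNReal.ofReal_sub _ (by linarith)]
  norm_num

lemma cnt_mul' {n : ℕ} (ξ : ℕ → Fin n) (a b : Fin n) (v : ℕ) (c : ℝ≥0∞) :
    c * cnt ξ a b v = ∑' k : ℕ, (if ξ k = a ∧ looks ξ b k ≤ v then c else 0) := by
  rw [cnt, ← ENNReal.tsum_mul_left]
  exact tsum_congr fun k => by split <;> simp

/-- diagonal bound: if `j` is searched at least `m+1` times then `cnt ξ j j m ≥ m+1`. -/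
lemma cnt_diag_ge {n : ℕ} (ξ : ℕ → Fin n) {j : Fin n} {m : ℕ}
    (hm : ∀ w ≤ m, ∃ k, ξ k = j ∧ looks ξ j k = w) :
    ((m:ℝ≥0∞) + 1) ≤ cnt ξ j j m := by
  set g : ℕ → ℕ := fun w => if h : ∃ k, ξ k = j ∧ looks ξ j k = w then h.choose else 0 with hg
  have hgspec : ∀ w ≤ m, ξ (g w) = j ∧ looks ξ j (g w) = w := by
    intro w hw
    obtain h := hm w hw
    simp only [hg, dif_pos h]
    exact h.choose_spec
  set F : Finset ℕ := (Finset.range (m+1)).image g with hF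
  have hcard : F.card = m + 1 := by
    rw [hF, Finset.card_image_of_injOn, Finset.card_range]
    intro w hw w' hw' he
    have h1 := (hgspec w (by simpa [Nat.lt_succ_iff] using hw)).2
    have h2 := (hgspec w' (by simpa [Nat.lt_succ_iff] using hw')).2
    rw [he] at h1; omega
  calc ((m:ℝ≥0∞) + 1) = (F.card : ℝ≥0∞) := by rw [hcard]; push_cast; ring
    _ = ∑ k ∈ F, (1 : ℝ≥0∞) := by simp
    _ = ∑ k ∈ F, (if ξ k = j ∧ looks ξ j k ≤ m then (1:ℝ≥0∞) else 0) := by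
        apply Finset.sum_congr rfl
        intro k hk
        rw [hF, Finset.mem_image] at hk
        obtain ⟨w, hw, hwk⟩ := hk
        have hwm : w ≤ m := by simpa [Nat.lt_succ_iff] using hw
        have hks := hgspec w hwm
        rw [hwk] at hks
        rw [if_pos ⟨hks.1, by omega⟩]
    _ ≤ cnt ξ j j m := ENNReal.sum_le_tsum F

lemma tsum_exists_le {n : ℕ} (ξ : ℕ → Fin n) (a b : Fin n) (v : ℕ) (c : ℝ≥0∞) :
    ∑' w : ℕ, (if (∃ k, ξ k = b ∧ looks ξ b k = w ∧ looks ξ a k ≤ v) then c else 0)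
      ≤ ∑' k : ℕ, (if ξ k = b ∧ looks ξ a k ≤ v then c else 0) := by
  calc ∑' w : ℕ, (if (∃ k, ξ k = b ∧ looks ξ b k = w ∧ looks ξ a k ≤ v) then c else 0)
      ≤ ∑' w : ℕ, ∑' k : ℕ,
          (if ξ k = b ∧ looks ξ b k = w ∧ looks ξ a k ≤ v then c else 0) := by
        apply ENNReal.tsum_le_tsum
        intro w
        split
        · rename_i h
          obtain ⟨k₀, hk⟩ := h
          calc c = (if ξ k₀ = b ∧ looks ξ b k₀ = w ∧ looks ξ a k₀ ≤ v then c else 0) := by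
                rw [if_pos hk]
            _ ≤ _ := ENNReal.le_tsum k₀
        · exact zero_le
    _ = ∑' k : ℕ, ∑' w : ℕ,
          (if ξ k = b ∧ looks ξ b k = w ∧ looks ξ a k ≤ v then c else 0) := ENNReal.tsum_comm
    _ = ∑' k : ℕ, (if ξ k = b ∧ looks ξ a k ≤ v then c else 0) := by
        apply tsum_congr
        intro k
        rw [tsum_eq_single (looks ξ b k) ?_]
        · congr 1
          simp
        · intro w' hw'
          rw [if_neg]
          rintro ⟨_, h2, _⟩
          exact hw' h2.symm

lemma pair_bound {n : ℕ} (ξ : ℕ → Fin n) {a b : Fin n} (hab : a ≠ b) (r' : ℝ≥0∞)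
    (hr1 : r' ≤ 1)
    (hma : ∀ v, r' ^ v ≠ 0 → ∃ k, ξ k = a ∧ looks ξ a k = v)
    (hmb : ∀ w, r' ^ w ≠ 0 → ∃ k, ξ k = b ∧ looks ξ b k = w) :
    ∑' (v : ℕ), ∑' (w : ℕ), ((if w < v then r' ^ v else 0) + (if v ≤ w then r' ^ w else 0))
      ≤ (∑' m : ℕ, r' ^ m * cnt ξ b a m) + (∑' m : ℕ, r' ^ m * cnt ξ a b m) := by
  have hpowmono : ∀ {i j : ℕ}, i ≤ j → r' ^ j ≤ r' ^ i :=
    fun {i j} h => pow_le_pow_right_of_le_one' hr1 h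
  have hpow0 : ∀ {i j : ℕ}, i ≤ j → r' ^ j ≠ 0 → r' ^ i ≠ 0 := by
    intro i j h hj hi
    exact hj (by rw [show j = i + (j - i) by omega, pow_add, hi, zero_mul])
  have key : ∀ v w : ℕ,
      (if w < v then r' ^ v else 0) + (if v ≤ w then r' ^ w else 0) ≤
      (if (∃ k, ξ k = b ∧ looks ξ b k = w ∧ looks ξ a k ≤ v) then r' ^ v else 0)
      + (if (∃ k, ξ k = a ∧ looks ξ a k = v ∧ looks ξ b k ≤ w) then r' ^ w else 0) := by
    intro v w
    have dich : r' ^ v ≠ 0 → r' ^ w ≠ 0 →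
        (∃ k, ξ k = b ∧ looks ξ b k = w ∧ looks ξ a k ≤ v) ∨
        (∃ k, ξ k = a ∧ looks ξ a k = v ∧ looks ξ b k ≤ w) := by
      intro hv hw
      obtain ⟨ka, hka, hva⟩ := hma v hv
      obtain ⟨kb, hkb, hwb⟩ := hmb w hw
      by_cases h1 : looks ξ a kb ≤ v
      · exact Or.inl ⟨kb, hkb, hwb, h1⟩
      · by_cases h2 : looks ξ b ka ≤ w
        · exact Or.inr ⟨ka, hka, hva, h2⟩
        · exfalso
          have hk1 : ka < kb := lt_of_looks_lt ξ (show looks ξ a ka < looks ξ a kb by omega)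
          have hk2 : kb < ka := lt_of_looks_lt ξ (show looks ξ b kb < looks ξ b ka by omega)
          omega
    rcases lt_or_ge w v with hwv | hvw
    · rw [if_pos hwv, if_neg (by omega), add_zero]
      by_cases hv : r' ^ v = 0
      · rw [hv]; exact zero_le
      · have hw : r' ^ w ≠ 0 := hpow0 (by omega) hv
        rcases dich hv hw with h | h
        · rw [if_pos h]; exact le_add_of_le_of_nonneg le_rfl (zero_le)
        · rw [if_pos h]
          exact le_add_of_nonneg_of_le (zero_le) (hpowmono (by omega))
    · rw [if_neg (by omega), if_pos hvw, zero_add]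
      by_cases hw : r' ^ w = 0
      · rw [hw]; exact zero_le
      · have hv : r' ^ v ≠ 0 := hpow0 hvw hw
        rcases dich hv hw with h | h
        · rw [if_pos h]
          exact le_add_of_le_of_nonneg (hpowmono hvw) (zero_le)
        · rw [if_pos h]; exact le_add_of_nonneg_of_le (zero_le) le_rfl
  calc ∑' (v : ℕ), ∑' (w : ℕ), ((if w < v then r' ^ v else 0) + (if v ≤ w then r' ^ w else 0))
      ≤ ∑' (v : ℕ), ∑' (w : ℕ),
        ((if (∃ k, ξ k = b ∧ looks ξ b k = w ∧ looks ξ a k ≤ v) then r' ^ v else 0)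
         + (if (∃ k, ξ k = a ∧ looks ξ a k = v ∧ looks ξ b k ≤ w) then r' ^ w else 0)) :=
        ENNReal.tsum_le_tsum fun v => ENNReal.tsum_le_tsum fun w => key v w
    _ = (∑' (v : ℕ), ∑' (w : ℕ),
          (if (∃ k, ξ k = b ∧ looks ξ b k = w ∧ looks ξ a k ≤ v) then r' ^ v else 0))
        + (∑' (v : ℕ), ∑' (w : ℕ),
          (if (∃ k, ξ k = a ∧ looks ξ a k = v ∧ looks ξ b k ≤ w) then r' ^ w else 0)) := by
        rw [← ENNReal.tsum_add]
        exact tsum_congr fun v => ENNReal.tsum_add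
    _ ≤ (∑' m : ℕ, r' ^ m * cnt ξ b a m) + (∑' m : ℕ, r' ^ m * cnt ξ a b m) := by
        apply add_le_add
        · apply ENNReal.tsum_le_tsum
          intro v
          rw [cnt_mul']
          exact tsum_exists_le ξ a b v (r' ^ v)
        · rw [ENNReal.tsum_comm]
          apply ENNReal.tsum_le_tsum
          intro w
          rw [cnt_mul']
          exact tsum_exists_le ξ b a w (r' ^ w)

/-- decomposition of "time spent while `j` has had at most `m` looks" by box searched -/
lemma W_eq {n : ℕ} (ξ : ℕ → Fin n) (t : Fin n → ℝ) (j : Fin n) (m : ℕ) :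
    ∑' k : ℕ, ENNReal.ofReal (t (ξ k)) * (if looks ξ j k ≤ m then 1 else 0)
      = ∑ j' : Fin n, ENNReal.ofReal (t j') * cnt ξ j' j m := by
  have h : ∀ j' : Fin n, ENNReal.ofReal (t j') * cnt ξ j' j m
      = ∑' k : ℕ, (if ξ k = j' ∧ looks ξ j k ≤ m then ENNReal.ofReal (t j') else 0) :=
    fun j' => cnt_mul' ξ j' j m _
  rw [Finset.sum_congr rfl (fun j' _ => h j'), ← Summable.tsum_finsetSum (fun i _ => ENNReal.summable)]
  apply tsum_congr
  intro k
  by_cases hl : looks ξ j k ≤ m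
  · rw [if_pos hl, mul_one]
    have h2 : ∀ j' : Fin n, (if ξ k = j' ∧ looks ξ j k ≤ m then ENNReal.ofReal (t j') else 0)
        = (if ξ k = j' then ENNReal.ofReal (t j') else 0) := fun j' => by
      by_cases h : ξ k = j' <;> simp [h, hl]
    rw [Finset.sum_congr rfl (fun j' _ => h2 j')]
    simp
  · rw [if_neg hl, mul_zero]
    rw [Finset.sum_congr rfl (fun j' _ => by rw [if_neg (by tauto)])]
    simp

lemma searchTime_ge {n : ℕ} (t q : Fin n → ℝ) (ht0 : ∀ j', 0 ≤ t j') (qc : ℝ)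
    (hq : ∀ j, q j = qc) (hqc1 : qc ≤ 1) (j : Fin n) (ξ : ℕ → Fin n) :
    ENNReal.ofReal qc * ∑' m : ℕ, (ENNReal.ofReal (1 - qc)) ^ m *
      ∑' k : ℕ, (ENNReal.ofReal (t (ξ k)) * (if looks ξ j k ≤ m then 1 else 0))
    ≤ searchTime t q j ξ := by
  set r' : ℝ≥0∞ := ENNReal.ofReal (1 - qc) with hr'
  set qc' : ℝ≥0∞ := ENNReal.ofReal qc with hqc'
  have hsub : (1 : ℝ≥0∞) - r' = qc' := one_sub_ofReal_sub hqc1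
  have hst : searchTime t q j ξ = ∑' k : ℕ, ENNReal.ofReal (t (ξ k)) * r' ^ looks ξ j k := by
    unfold searchTime
    apply tsum_congr
    intro k
    rw [hq j, ENNReal.ofReal_mul (ht0 _), ENNReal.ofReal_pow (by linarith)]
  rw [hst]
  calc qc' * ∑' m : ℕ, r' ^ m *
        ∑' k : ℕ, (ENNReal.ofReal (t (ξ k)) * (if looks ξ j k ≤ m then 1 else 0))
      = qc' * ∑' m : ℕ, ∑' k : ℕ,
          (ENNReal.ofReal (t (ξ k)) * (if looks ξ j k ≤ m then r' ^ m else 0)) := by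
        congr 1
        apply tsum_congr
        intro m
        rw [← ENNReal.tsum_mul_left]
        apply tsum_congr
        intro k
        split <;> ring
    _ = ∑' k : ℕ, ENNReal.ofReal (t (ξ k)) *
          (qc' * ∑' m : ℕ, (if looks ξ j k ≤ m then r' ^ m else 0)) := by
        rw [ENNReal.tsum_comm, ← ENNReal.tsum_mul_left]
        apply tsum_congr
        intro k
        rw [ENNReal.tsum_mul_left]
        ring
    _ ≤ ∑' k : ℕ, ENNReal.ofReal (t (ξ k)) * r' ^ looks ξ j k := by
        apply ENNReal.tsum_le_tsum
        intro k
        apply mul_le_mul' le_rfl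
        rw [geo_shift, hsub]
        calc qc' * (r' ^ looks ξ j k * qc'⁻¹)
            = r' ^ looks ξ j k * (qc' * qc'⁻¹) := by ring
          _ ≤ r' ^ looks ξ j k * 1 := mul_le_mul' le_rfl (ENNReal.mul_inv_le_one qc')
          _ = r' ^ looks ξ j k := mul_one _

lemma real_pair_sum {n : ℕ} (t : Fin n → ℝ) (x y : ℝ) :
    ∑ j : Fin n, ∑ j' : Fin n, t j * t j' * (if j = j' then x else y)
      = (∑ j, (t j)^2) * x + ((∑ j, t j)^2 - ∑ j, (t j)^2) * y := by
  have h : ∀ j j' : Fin n, t j * t j' * (if j = j' then x else y)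
      = t j * t j' * y + (if j' = j then t j * t j' * (x - y) else 0) := by
    intro j j'
    by_cases h : j = j'
    · simp [h, eq_comm]; ring
    · rw [if_neg h, if_neg (fun hh => h hh.symm)]; ring
  have hsplit : ∑ j : Fin n, ∑ j' : Fin n, t j * t j' * (if j = j' then x else y)
      = (∑ j : Fin n, ∑ j' : Fin n, t j * t j' * y) + ∑ j : Fin n, t j * t j * (x - y) := by
    rw [← Finset.sum_add_distrib]
    refine Finset.sum_congr rfl fun j _ => ?_
    calc ∑ j' : Fin n, t j * t j' * (if j = j' then x else y)
        = ∑ j' : Fin n, (t j * t j' * y + (if j' = j then t j * t j' * (x - y) else 0)) :=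
          Finset.sum_congr rfl fun j' _ => h j j'
      _ = (∑ j' : Fin n, t j * t j' * y) + ∑ j' : Fin n, (if j' = j then t j * t j' * (x - y) else 0) :=
          Finset.sum_add_distrib
      _ = (∑ j' : Fin n, t j * t j' * y) + t j * t j * (x - y) := by
          rw [Finset.sum_ite_eq', if_pos (Finset.mem_univ j)]
  rw [hsplit]
  have h2 : ∑ j : Fin n, ∑ j' : Fin n, t j * t j' * y = (∑ j, t j) * (∑ j, t j) * y := by
    rw [Finset.sum_mul_sum]
    simp_rw [Finset.sum_mul]
  have h3 : ∑ j : Fin n, t j * t j * (x - y) = (∑ j, (t j)^2) * (x - y) := by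
    rw [Finset.sum_mul]
    exact Finset.sum_congr rfl fun j _ => by ring
  rw [h2, h3]; ring

lemma final_arith {T s2 qc : ℝ} (hT : 0 < T) (hqc : 0 < qc) :
    (1 - qc) * T / qc + (s2 + T^2) / (2 * T)
      = T⁻¹ * (qc * ((s2 * (2*((1-qc)/qc^2 + qc⁻¹))
        + (T^2 - s2) * ((1-qc)/qc^2 + qc⁻¹ * qc⁻¹)) / 2)) := by
  field_simp
  ring

/-- with equal detection probabilities `q_j = qc ∈ (0,1]`, the Hider's
equalizing strategy `p*_j = t_j / T` (with `T = Σ_i t_i`) guarantees expected search time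
at least `(1−qc)T/qc + (Σ_j t_j² + T²)/(2T)` against every Searcher sequence. -/
theorem equalizing_strategy_lower_bound
    {n : ℕ} (t q : Fin n → ℝ) (ht : ∀ j, 0 < t j)
    (qc : ℝ) (hq : ∀ j, q j = qc) (hqc0 : 0 < qc) (hqc1 : qc ≤ 1) :
    ∀ ξ : ℕ → Fin n,
      ENNReal.ofReal
          ((1 - qc) * (∑ j, t j) / qc +
            ((∑ j, t j ^ 2) + (∑ j, t j) ^ 2) / (2 * ∑ j, t j)) ≤
        mixedSearchTime t q (fun j => t j / ∑ i, t i) ξ := by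
  intro ξ
  have hne : (Finset.univ : Finset (Fin n)).Nonempty := ⟨ξ 0, Finset.mem_univ _⟩
  have hT0 : 0 < ∑ j, t j := Finset.sum_pos (fun j _ => ht j) hne
  set T : ℝ := ∑ j, t j with hTdef
  have hr0 : (0:ℝ) ≤ 1 - qc := by linarith
  have hr1 : 1 - qc < 1 := by linarith
  set r' : ℝ≥0∞ := ENNReal.ofReal (1 - qc) with hr'def
  set qc' : ℝ≥0∞ := ENNReal.ofReal qc with hqc'def
  by_cases hmany : ∀ (j : Fin n) (v : ℕ), r' ^ v ≠ 0 → ∃ k, ξ k = j ∧ looks ξ j k = v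
  · -- main case: every box is searched often enough
    set t' : Fin n → ℝ≥0∞ := fun j => ENNReal.ofReal (t j) with ht'def
    set M : Fin n → Fin n → ℝ≥0∞ := fun j j' => ∑' m : ℕ, r' ^ m * cnt ξ j' j m with hMdef
    set S : ℝ≥0∞ := ∑ j, t' j * ∑ j', t' j' * M j j' with hSdef
    -- Step 1 : lower bound for the mixed search time in terms of S
    have hstep1 : (ENNReal.ofReal T)⁻¹ * (qc' * S) ≤ mixedSearchTime t q (fun j => t j / T) ξ := by
      simp only [mixedSearchTime]
      rw [hSdef, Finset.mul_sum, Finset.mul_sum]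
      apply Finset.sum_le_sum
      intro j _
      have h2 : ∑ j', t' j' * M j j' = ∑' m : ℕ, r' ^ m *
          ∑ j'' : Fin n, t' j'' * cnt ξ j'' j m := by
        calc ∑ j', t' j' * M j j'
            = ∑ j', ∑' m : ℕ, t' j' * (r' ^ m * cnt ξ j' j m) := by
              refine Finset.sum_congr rfl fun j' _ => ?_
              rw [hMdef, ENNReal.tsum_mul_left]
          _ = ∑' m : ℕ, ∑ j', t' j' * (r' ^ m * cnt ξ j' j m) :=
              (Summable.tsum_finsetSum (fun i _ => ENNReal.summable)).symm
          _ = ∑' m : ℕ, r' ^ m * ∑ j'' : Fin n, t' j'' * cnt ξ j'' j m := by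
              refine tsum_congr fun m => ?_
              rw [Finset.mul_sum]
              exact Finset.sum_congr rfl fun j' _ => by ring
      have h3 := searchTime_ge t q (fun j' => (ht j').le) qc hq hqc1 j ξ
      rw [← hr'def, ← hqc'def] at h3
      have h4 : ∑' m : ℕ, r' ^ m * ∑' k : ℕ,
            (ENNReal.ofReal (t (ξ k)) * (if looks ξ j k ≤ m then 1 else 0))
          = ∑' m : ℕ, r' ^ m * ∑ j'' : Fin n, t' j'' * cnt ξ j'' j m :=
        tsum_congr fun m => by rw [W_eq]
      rw [h4] at h3
      have h5 : ENNReal.ofReal (t j / T) = t' j * (ENNReal.ofReal T)⁻¹ := by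
        rw [ht'def, ENNReal.ofReal_div_of_pos hT0, div_eq_mul_inv]
      calc (ENNReal.ofReal T)⁻¹ * (qc' * (t' j * ∑ j', t' j' * M j j'))
          = (t' j * (ENNReal.ofReal T)⁻¹) *
            (qc' * (∑' m : ℕ, r' ^ m * ∑ j'' : Fin n, t' j'' * cnt ξ j'' j m)) := by
            rw [h2]; ring
        _ ≤ (t' j * (ENNReal.ofReal T)⁻¹) * searchTime t q j ξ := mul_le_mul' le_rfl h3
        _ = ENNReal.ofReal (t j / T) * searchTime t q j ξ := by rw [h5]
    -- the two grid sums
    set G1 : ℝ≥0∞ := ∑' m : ℕ, ((m : ℝ≥0∞) + 1) * r' ^ m with hG1def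
    set G2 : ℝ≥0∞ := ∑' (v : ℕ), ∑' (w : ℕ),
      ((if w < v then r' ^ v else 0) + (if v ≤ w then r' ^ w else 0)) with hG2def
    have hpow0 : ∀ {i jn : ℕ}, i ≤ jn → r' ^ jn ≠ 0 → r' ^ i ≠ 0 := by
      intro i jn h hj hi
      exact hj (by rw [show jn = i + (jn - i) by omega, pow_add, hi, zero_mul])
    have hdiag : ∀ j : Fin n, G1 ≤ M j j := by
      intro j
      rw [hG1def, hMdef]
      apply ENNReal.tsum_le_tsum
      intro m
      by_cases hm : r' ^ m = 0
      · simp [hm]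
      · calc ((m:ℝ≥0∞)+1) * r' ^ m = r' ^ m * ((m:ℝ≥0∞)+1) := mul_comm _ _
          _ ≤ r' ^ m * cnt ξ j j m :=
            mul_le_mul' le_rfl (cnt_diag_ge ξ (fun w hw => hmany j w (hpow0 hw hm)))
    have hoff : ∀ a b : Fin n, a ≠ b → G2 ≤ M a b + M b a := by
      intro a b hab
      rw [hG2def, hMdef]
      exact pair_bound ξ hab r'
        (by rw [hr'def]; exact ENNReal.ofReal_le_one.2 (by linarith))
        (hmany a) (hmany b)
    set K : Fin n → Fin n → ℝ≥0∞ := fun j j' => if j = j' then 2 * G1 else G2 with hKdef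
    have hK : ∀ j j', K j j' ≤ M j j' + M j' j := by
      intro j j'
      simp only [hKdef]
      by_cases h : j = j'
      · subst h
        rw [if_pos rfl, two_mul]
        exact add_le_add (hdiag j) (hdiag j)
      · rw [if_neg h]; exact hoff j j' h
    have h2S : ∑ j, ∑ j', t' j * t' j' * K j j' ≤ 2 * S := by
      have hSd : S = ∑ j, ∑ j', t' j * (t' j' * M j j') := by
        rw [hSdef]; exact Finset.sum_congr rfl fun j _ => Finset.mul_sum _ _ _
      calc ∑ j, ∑ j', t' j * t' j' * K j j'
          ≤ ∑ j, ∑ j', t' j * t' j' * (M j j' + M j' j) :=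
            Finset.sum_le_sum fun j _ => Finset.sum_le_sum fun j' _ =>
              mul_le_mul' le_rfl (hK j j')
        _ = (∑ j, ∑ j', t' j * (t' j' * M j j')) + ∑ j, ∑ j', t' j * (t' j' * M j' j) := by
            rw [← Finset.sum_add_distrib]
            refine Finset.sum_congr rfl fun j _ => ?_
            rw [← Finset.sum_add_distrib]
            exact Finset.sum_congr rfl fun j' _ => by ring
        _ = S + S := by
            congr 1
            · exact hSd.symm
            · rw [Finset.sum_comm, hSd]
              exact Finset.sum_congr rfl fun j _ => Finset.sum_congr rfl fun j' _ => by ring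
        _ = 2 * S := (two_mul S).symm
    -- evaluate G1 and G2
    have hqq : (1:ℝ) - (1 - qc) = qc := by ring
    have hS1 : ∑' v : ℕ, (v : ℝ≥0∞) * r' ^ v = ENNReal.ofReal ((1-qc)/qc^2) := by
      rw [hr'def, S1_eval hr0 hr1, hqq]
    have hinv : (1 - r')⁻¹ = ENNReal.ofReal qc⁻¹ := by
      rw [hr'def, one_sub_ofReal_sub hqc1, ENNReal.ofReal_inv_of_pos hqc0]
    have hG1v : G1 = ENNReal.ofReal ((1-qc)/qc^2 + qc⁻¹) := by
      rw [hG1def, diag_eval, hS1, hinv,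
        ← ENNReal.ofReal_add (by positivity) (by positivity)]
    have hG2v : G2 = ENNReal.ofReal ((1-qc)/qc^2 + qc⁻¹ * qc⁻¹) := by
      rw [hG2def, grid_eval, hS1, hinv, ← ENNReal.ofReal_mul (by positivity),
        ← ENNReal.ofReal_add (by positivity) (by positivity)]
    -- turn the K-sum into a real sum
    set κ : Fin n → Fin n → ℝ := fun j j' =>
      if j = j' then 2*((1-qc)/qc^2 + qc⁻¹) else ((1-qc)/qc^2 + qc⁻¹ * qc⁻¹) with hκdef
    have hκ0 : ∀ j j', 0 ≤ κ j j' := by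
      intro j j'
      simp only [hκdef]
      split <;> positivity
    have hKreal : ∀ j j', t' j * t' j' * K j j' = ENNReal.ofReal (t j * t j' * κ j j') := by
      intro j j'
      simp only [hKdef, hκdef, ht'def]
      have h2of : ∀ g : ℝ, 0 ≤ g → (2:ℝ≥0∞) * ENNReal.ofReal g = ENNReal.ofReal (2 * g) := by
        intro g hg
        rw [ENNReal.ofReal_mul (by norm_num : (0:ℝ) ≤ 2), ENNReal.ofReal_ofNat]
      by_cases h : j = j'
      · rw [if_pos h, if_pos h, hG1v, h2of _ (by positivity),
          ← ENNReal.ofReal_mul (ht j).le, ← ENNReal.ofReal_mul (mul_nonneg (ht j).le (ht j').le)]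
      · rw [if_neg h, if_neg h, hG2v,
          ← ENNReal.ofReal_mul (ht j).le, ← ENNReal.ofReal_mul (mul_nonneg (ht j).le (ht j').le)]
    have hSums : ∑ j, ∑ j', t' j * t' j' * K j j'
        = ENNReal.ofReal (∑ j : Fin n, ∑ j' : Fin n, t j * t j' * κ j j') := by
      rw [ENNReal.ofReal_sum_of_nonneg (fun j _ => Finset.sum_nonneg fun j' _ =>
        mul_nonneg (mul_nonneg (ht j).le (ht j').le) (hκ0 j j'))]
      refine Finset.sum_congr rfl fun j _ => ?_
      rw [ENNReal.ofReal_sum_of_nonneg (fun j' _ =>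
        mul_nonneg (mul_nonneg (ht j).le (ht j').le) (hκ0 j j'))]
      exact Finset.sum_congr rfl fun j' _ => hKreal j j'
    have hval : ∑ j : Fin n, ∑ j' : Fin n, t j * t j' * κ j j'
        = (∑ j, (t j)^2) * (2*((1-qc)/qc^2 + qc⁻¹))
          + (T^2 - ∑ j, (t j)^2) * ((1-qc)/qc^2 + qc⁻¹ * qc⁻¹) := by
      simp only [hκdef]
      rw [real_pair_sum, ← hTdef]
    set SK : ℝ := (∑ j, (t j)^2) * (2*((1-qc)/qc^2 + qc⁻¹))
      + (T^2 - ∑ j, (t j)^2) * ((1-qc)/qc^2 + qc⁻¹ * qc⁻¹) with hSKdef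
    have hofK : ENNReal.ofReal SK ≤ 2 * S := by
      rw [hval] at hSums
      rw [← hSums]
      exact h2S
    have hhalf : ENNReal.ofReal (SK / 2) ≤ S := by
      have h2' : (2:ℝ≥0∞) * ENNReal.ofReal (SK/2) = ENNReal.ofReal SK := by
        rw [show ((2:ℝ≥0∞)) = ENNReal.ofReal (2:ℝ) from (ENNReal.ofReal_ofNat 2).symm,
          ← ENNReal.ofReal_mul (by norm_num : (0:ℝ) ≤ 2)]
        congr 1
        ring
      refine (ENNReal.mul_le_mul_iff_right (a := (2:ℝ≥0∞)) (by norm_num) (by norm_num)).mp ?_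
      rw [h2']
      exact hofK
    calc ENNReal.ofReal ((1 - qc) * T / qc + ((∑ j, t j ^ 2) + T ^ 2) / (2 * T))
        = ENNReal.ofReal (T⁻¹ * (qc * (SK / 2))) := by
          rw [show (∑ j, t j ^ 2) = ∑ j, (t j)^2 from rfl, final_arith hT0 hqc0, ← hSKdef]
      _ = (ENNReal.ofReal T)⁻¹ * (qc' * ENNReal.ofReal (SK/2)) := by
          rw [ENNReal.ofReal_mul (by positivity : (0:ℝ) ≤ T⁻¹), ENNReal.ofReal_mul hqc0.le,
            ENNReal.ofReal_inv_of_pos hT0, ← hqc'def]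
      _ ≤ (ENNReal.ofReal T)⁻¹ * (qc' * S) := mul_le_mul' le_rfl (mul_le_mul' le_rfl hhalf)
      _ ≤ mixedSearchTime t q (fun j => t j / T) ξ := hstep1
  · -- degenerate case : some box is searched too few times, infinite expected time
    push_neg at hmany
    obtain ⟨j, v, hv, hnm⟩ := hmany
    have h1 : ENNReal.ofReal ((1-qc)^v) ≠ 0 := by
      rw [ENNReal.ofReal_pow hr0]
      exact hv
    have h2 : 0 < (1-qc)^v := by
      by_contra h
      exact h1 (ENNReal.ofReal_eq_zero.2 (not_lt.1 h))
    have hnm' : ¬∃ k, ξ k = j ∧ looks ξ j k = v := by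
      push_neg
      exact hnm
    have htop := searchTime_eq_top t q ht j ξ v
      (by rw [hq j]; exact hqc0.le) (by rw [hq j]; exact hqc1)
      (by rw [hq j]; exact h2) hnm'
    have hmix : (⊤:ℝ≥0∞) ≤ mixedSearchTime t q (fun j => t j / T) ξ := by
      calc (⊤:ℝ≥0∞) = ENNReal.ofReal (t j / T) * searchTime t q j ξ := by
            rw [htop, ENNReal.mul_top]
            rw [Ne, ENNReal.ofReal_eq_zero, not_le]
            exact div_pos (ht j) hT0
        _ ≤ ∑ j' : Fin n, ENNReal.ofReal (t j' / T) * searchTime t q j' ξ :=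
            Finset.single_le_sum
              (f := fun j' : Fin n => ENNReal.ofReal (t j' / T) * searchTime t q j' ξ)
              (fun i _ => zero_le) (Finset.mem_univ j)
        _ = mixedSearchTime t q (fun j => t j / T) ξ := rfl
    exact le_top.trans hmix
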